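/- For any d×d complex matrix A and any positive definite matrix σ with trace 1, ‖A‖₁² ≤ tr[A† Ω(A)] · max_{U unitary} tr[U† Ω⁻¹(U)], where Ω is any positive definite invertible linear map on matrices; in particular for the Bures inversion Ω(X) = 2(σX + Xσ)⁻¹-type map, i.e. Ω⁻¹(X) = (σX + Xσ)/2, the maximum over unitaries equals 1, hence ‖A‖₁² ≤ tr[A† Ω_Bures(A)]. -/

import Mathlib

open Matrix
open scoped ComplexOrder

/-- The trace norm `‖A‖₁ = tr √(A†A)` of a complex matrix. -/
noncomputable def traceNorm {d : ℕ} (A : Matrix (Fin d) (Fin d) ℂ) : ℝ :=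
  (((Matrix.posSemidef_conjTranspose_mul_self A).1.eigenvectorUnitary : Matrix (Fin d) (Fin d) ℂ) *
    diagonal (((↑) : ℝ → ℂ) ∘ Real.sqrt ∘ (Matrix.posSemidef_conjTranspose_mul_self A).1.eigenvalues) *
    (star ((Matrix.posSemidef_conjTranspose_mul_self A).1.eigenvectorUnitary :
      Matrix (Fin d) (Fin d) ℂ))).trace.re

/-!
For `σ ≥ 0` the form `B(u, w) = Re tr[u† (σw + wσ)]` is a positive semidefinite symmetric real
bilinear form, and the equation for `Y` says `B(u, Y) = 2 Re tr[u† A]` for every `u`. Take for `x`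
the partial isometry of the polar decomposition `A = x |A|`, so that `x† A = |A|`. Then
`B(x, Y) = 2 ‖A‖₁`, `B(Y, Y) = 2 Re tr[A† Y]`, and since `x x† ≤ 1` and `x† x ≤ 1`,
`B(x, x) = Re tr[(x x† + x† x) σ] ≤ 2 tr σ = 2`. Cauchy–Schwarz for `B` gives the claim.
-/

open scoped MatrixOrder

lemma mul_star_self_le_one_of_star_mul_self_le_one {A : Type*} [CStarAlgebra A] [PartialOrder A]
    [StarOrderedRing A] {x : A} (h : star x * x ≤ 1) : x * star x ≤ 1 := by
  rw [← CStarAlgebra.norm_le_one_iff_of_nonneg _ (mul_star_self_nonneg x),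
    CStarRing.norm_self_mul_star, ← CStarRing.norm_star_mul_self]
  exact (CStarAlgebra.norm_le_one_iff_of_nonneg _ (star_mul_self_nonneg x)).2 h

namespace Matrix

variable {n 𝕜 : Type*} [Fintype n] [RCLike 𝕜]

noncomputable def buresForm (σ : Matrix n n 𝕜) : LinearMap.BilinForm ℝ (Matrix n n 𝕜) :=
  LinearMap.mk₂ ℝ (fun u w => RCLike.re (uᴴ * (σ * w + w * σ)).trace)
    (fun _ _ _ => by simp [add_mul])
    (fun _ _ _ => by rw [conjTranspose_smul, star_trivial, smul_mul, trace_smul, RCLike.smul_re,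
      smul_eq_mul])
    (fun _ _ _ => by simp [mul_add, add_mul]; ring)
    (fun _ _ _ => by simp [← smul_add, RCLike.smul_re])

lemma buresForm_apply (σ u w : Matrix n n 𝕜) :
    buresForm σ u w = RCLike.re (uᴴ * (σ * w + w * σ)).trace := rfl

lemma buresForm_isSymm {σ : Matrix n n 𝕜} (hσ : σ.IsHermitian) :
    LinearMap.IsSymm (buresForm σ) := by
  refine ⟨fun u w => ?_⟩
  rw [RingHom.id_apply, buresForm_apply, buresForm_apply, ← RCLike.conj_re, ← RCLike.star_def,
    ← trace_conjTranspose]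
  simp only [conjTranspose_mul, conjTranspose_add, conjTranspose_conjTranspose, hσ.eq, mul_add,
    trace_add, mul_assoc]
  rw [trace_mul_comm σ, mul_assoc, add_comm]

lemma buresForm_self_nonneg {σ : Matrix n n 𝕜} (hσ : 0 ≤ σ) (u : Matrix n n 𝕜) :
    0 ≤ buresForm σ u u := by
  have h : 0 ≤ uᴴ * σ * u + u * σ * uᴴ :=
    add_nonneg (star_left_conjugate_nonneg hσ u) (star_right_conjugate_nonneg hσ u)
  rw [buresForm_apply, mul_add, trace_add, ← mul_assoc, ← mul_assoc, ← trace_mul_cycle u σ uᴴ,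
    ← trace_add]
  exact (RCLike.nonneg_iff.1 h.posSemidef.trace_nonneg).1

variable [DecidableEq n]

open scoped Matrix.Norms.L2Operator in
lemma mul_conjTranspose_self_le_one {x : Matrix n n ℂ} (h : xᴴ * x ≤ 1) : x * xᴴ ≤ 1 :=
  mul_star_self_le_one_of_star_mul_self_le_one h

lemma re_trace_mul_le_of_le_one {σ M : Matrix n n 𝕜} (hσ : 0 ≤ σ) (hM : M ≤ 1) :
    RCLike.re (M * σ).trace ≤ RCLike.re σ.trace := by
  have h : 0 ≤ (CFC.sqrt σ * (1 - M) * CFC.sqrt σ).trace :=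
    (conjugate_nonneg_of_nonneg (sub_nonneg.2 hM) (CFC.sqrt_nonneg σ)).posSemidef.trace_nonneg
  rw [trace_mul_cycle, CFC.sqrt_mul_sqrt_self σ, trace_mul_comm, sub_mul, one_mul] at h
  simpa using (RCLike.nonneg_iff.1 h).1

lemma buresForm_self_le_of_conjTranspose_mul_self_le_one {σ x : Matrix n n ℂ} (hσ : 0 ≤ σ)
    (hx : xᴴ * x ≤ 1) : buresForm σ x x ≤ 2 * RCLike.re σ.trace := by
  have h₁ := re_trace_mul_le_of_le_one hσ (mul_conjTranspose_self_le_one hx)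
  have h₂ := re_trace_mul_le_of_le_one hσ hx
  rw [buresForm_apply, mul_add, trace_add, ← mul_assoc, ← mul_assoc, trace_mul_cycle xᴴ, map_add]
  linarith

lemma exists_conjTranspose_mul_self_le_one_and_conjTranspose_mul_eq_sqrt (A : Matrix n n 𝕜) :
    ∃ x : Matrix n n 𝕜, xᴴ * x ≤ 1 ∧ xᴴ * A = cfc Real.sqrt (Aᴴ * A) := by
  have hcont (f : ℝ → ℝ) : ContinuousOn f (spectrum ℝ (Aᴴ * A)) :=
    (Aᴴ * A).finite_real_spectrum.continuousOn f
  have hA : IsSelfAdjoint (Aᴴ * A) := isHermitian_conjTranspose_mul_self A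
  -- `(√0)⁻¹ = 0`, so `x = A P` is `A |A|⁻¹` on the range of `|A|` and vanishes on its kernel.
  set P := cfc (fun t => (√t)⁻¹) (Aᴴ * A) with hPdef
  have hP : Pᴴ = P := (cfc_predicate (fun t => (√t)⁻¹) (Aᴴ * A)).star_eq
  have hPA : P * (Aᴴ * A) = cfc Real.sqrt (Aᴴ * A) := by
    have h : (fun t => (√t)⁻¹ * t) = Real.sqrt := funext fun t => by
      rw [inv_mul_eq_div, Real.div_sqrt]
    rw [← h, cfc_mul _ _ _ (hcont _) (hcont _), cfc_id' ℝ (Aᴴ * A) hA]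
  refine ⟨A * P, ?_, by rw [conjTranspose_mul, hP, mul_assoc, hPA]⟩
  have hxx : (A * P)ᴴ * (A * P) = cfc (fun t => √t * (√t)⁻¹) (Aᴴ * A) := by
    rw [cfc_mul _ _ _ (hcont _) (hcont _), ← hPA, ← hPdef, conjTranspose_mul, hP]
    simp only [mul_assoc]
  rw [hxx]
  exact cfc_le_one _ _ fun t _ => mul_inv_le_one

end Matrix

lemma traceNorm_eq_re_trace_cfc_sqrt {d : ℕ} (A : Matrix (Fin d) (Fin d) ℂ) :
    traceNorm A = (cfc Real.sqrt (Aᴴ * A)).trace.re := by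
  rw [(posSemidef_conjTranspose_mul_self A).1.cfc_eq]
  rfl

/-- For any matrix `A` and positive definite density matrix `σ`,
`‖A‖₁² ≤ ⟨A, Ω_Bures(A)⟩`, where `Y = Ω_Bures(A)` is the unique solution of
`σY + Yσ = 2A` (the Bures inversion) and `⟨X,Y⟩ = tr[X†Y]`. -/
theorem traceNorm_sq_le_bures (d : ℕ) (A σ Y : Matrix (Fin d) (Fin d) ℂ)
    (hσ : σ.PosDef) (hσtr : σ.trace = 1)
    (hY : σ * Y + Y * σ = (2 : ℂ) • A) :
    traceNorm A ^ 2 ≤ ((Aᴴ * Y).trace).re := by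
  have hσ₀ : 0 ≤ σ := hσ.posSemidef.nonneg
  obtain ⟨x, hx, hxA⟩ := exists_conjTranspose_mul_self_le_one_and_conjTranspose_mul_eq_sqrt A
  have hxY : buresForm σ x Y = 2 * traceNorm A := by
    rw [buresForm_apply, hY, mul_smul_comm, trace_smul, hxA, traceNorm_eq_re_trace_cfc_sqrt]
    simp
  have hYY : buresForm σ Y Y = 2 * (Aᴴ * Y).trace.re := by
    rw [buresForm_apply, hY, mul_smul_comm, trace_smul, ← Complex.conj_re, ← Complex.star_def,
      ← trace_conjTranspose, conjTranspose_mul, conjTranspose_conjTranspose]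
    simp
  have hxx : buresForm σ x x ≤ 2 := by
    simpa [hσtr] using buresForm_self_le_of_conjTranspose_mul_self_le_one hσ₀ hx
  have hCS := (buresForm σ).apply_sq_le_of_symm (buresForm_self_nonneg hσ₀)
    (buresForm_isSymm hσ.isHermitian) x Y
  have h : (2 * traceNorm A) ^ 2 ≤ 2 * (2 * (Aᴴ * Y).trace.re) := by
    rw [← hxY, ← hYY]
    exact hCS.trans (mul_le_mul_of_nonneg_right hxx (buresForm_self_nonneg hσ₀ Y))
  linarith
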